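/- arXiv:2604.26472 — 3 statements merged into one kernel-verified Lean document; each statement's English description precedes it below -/
import Mathlib

section
/- Let P be a finite poset and g an edge field on J(P) whose diamond curvature vanishes: for every ideal I and incomparable u, v ∈ A(I), g(I,v) + g(I∪{v}, u) = g(I,u) + g(I∪{u}, v). Then there exists a function Φ : J(P) → ℝ such that g(I,a) = Φ(I ∪ {a}) − Φ(I) for every admissible edge. -/
open Finset

variable {S : Type*} [Fintype S] [DecidableEq S] [PartialOrder S]

/-- An ideal (downward-closed set) of the poset `S`. -/
def IsIdeal (I : Finset S) : Prop := ∀ s ∈ I, ∀ u : S, u ≤ s → u ∈ I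

/-- `a` is an admissible addition to the ideal `I`. -/
def Adm (I : Finset S) (a : S) : Prop := a ∉ I ∧ ∀ u : S, u < a → u ∈ I

/-- Diamond curvature of the edge field `g` at the diamond `(I; u, v)`. -/
def curv (g : Finset S → S → ℝ) (I : Finset S) (u v : S) : ℝ :=
  g I v + g (insert v I) u - g I u - g (insert u I) v

noncomputable def Phi (g : Finset S → S → ℝ) : ℕ → Finset S → ℝ
  | 0, _ => 0
  | (n+1), I =>
    @dite _ (∃ a, a ∈ I ∧ IsIdeal (I.erase a) ∧ Adm (I.erase a) a)
      (Classical.propDecidable _)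
      (fun h => Phi g n (I.erase h.choose) + g (I.erase h.choose) h.choose)
      (fun _ => 0)

lemma phi_step (g : Finset S → S → ℝ)
    (hflat : ∀ (I : Finset S) (u v : S), IsIdeal I → Adm I u → Adm I v →
      ¬ u ≤ v → ¬ v ≤ u → curv g I u v = 0) :
    ∀ n (I : Finset S) (a : S), I.card = n → IsIdeal I → Adm I a →
      Phi g (n+1) (insert a I) = Phi g n I + g I a := by
  intro n
  induction n using Nat.strong_induction_on with
  | _ n IH =>
    intro I a hcard hI ha
    have haI : a ∉ I := ha.1
    set J := insert a I with hJ
    have hexists : ∃ c, c ∈ J ∧ IsIdeal (J.erase c) ∧ Adm (J.erase c) c := by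
      refine ⟨a, mem_insert_self _ _, ?_, ?_⟩ <;>
        rw [Finset.erase_insert haI] <;> [exact hI; exact ha]
    rw [Phi, dif_pos hexists]
    set c := hexists.choose with hcdef
    obtain ⟨hcJ, hJc_ideal, hJc_adm⟩ := hexists.choose_spec
    by_cases hceq : c = a
    · rw [hceq, Finset.erase_insert haI]
    · have hcI : c ∈ I := by
        rcases mem_insert.mp hcJ with h | h
        · exact absurd h hceq
        · exact h
      -- a and c are incomparable
      have hac : ¬ a ≤ c := fun h => haI (hI c hcI a h)
      have hca : ¬ c ≤ a := by
        intro h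
        have haJ : a ∈ J.erase c := by
          refine mem_erase.mpr ⟨fun h' => hceq (h'.symm ▸ rfl), mem_insert_self _ _⟩
        have := hJc_ideal a haJ c h
        exact (mem_erase.mp this).1 rfl
      set K := I.erase c with hK
      have hcnotinJerase : ∀ s, s ∈ J.erase c → ¬ c ≤ s ∨ c = s := by
        intro s hs
        by_cases h : c = s
        · right; exact h
        · left; intro hle
          have := hJc_ideal s hs c hle
          exact (mem_erase.mp this).1 rfl
      have hKideal : IsIdeal K := by
        intro s hs u hu
        obtain ⟨hsc, hsI⟩ := mem_erase.mp hs
        have huI : u ∈ I := hI s hsI u hu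
        refine mem_erase.mpr ⟨?_, huI⟩
        intro huc
        subst huc
        have hsJ : s ∈ J.erase c := mem_erase.mpr ⟨hsc, mem_insert_of_mem hsI⟩
        rcases hcnotinJerase s hsJ with h | h
        · exact h hu
        · exact hsc h.symm
      have hKc : Adm K c := by
        refine ⟨notMem_erase _ _, fun u hu => ?_⟩
        exact mem_erase.mpr ⟨ne_of_lt hu, hI c hcI u hu.le⟩
      have hKa : Adm K a := by
        refine ⟨fun h => haI (mem_erase.mp h).2, fun u hu => ?_⟩
        refine mem_erase.mpr ⟨?_, ha.2 u hu⟩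
        intro huc; subst huc; exact hca hu.le
      have hicK : insert c K = I := Finset.insert_erase hcI
      have hiaK : insert a K = J.erase c := by
        rw [hK, hJ, Finset.erase_insert_of_ne (fun h => hceq h.symm)]
      have hcurv := hflat K a c hKideal hKa hKc hac hca
      rw [curv, hicK, hiaK] at hcurv
      -- cardinalities
      have hcard1 : c ∈ I := hcI
      obtain ⟨m, hm⟩ : ∃ m, n = m + 1 := by
        rcases n with _ | m
        · exact absurd (card_eq_zero.mp hcard ▸ hcI) (notMem_empty c)
        · exact ⟨m, rfl⟩
      have hKcard : K.card = m := by
        rw [hK, Finset.card_erase_of_mem hcI]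
        omega
      have h1 : Phi g n (J.erase c) = Phi g m K + g K a := by
        rw [← hiaK, hm]
        exact IH m (by omega) K a hKcard hKideal hKa
      have h2 : Phi g n I = Phi g m K + g K c := by
        rw [← hicK, hm]
        exact IH m (by omega) K c hKcard hKideal hKc
      rw [h1, h2]
      have : g (J.erase c) c = g (J.erase c) hexists.choose := rfl
      rw [← this]
      linear_combination -hcurv

theorem zero_curvature_implies_gradient (g : Finset S → S → ℝ)
    (hflat : ∀ (I : Finset S) (u v : S), IsIdeal I → Adm I u → Adm I v →
      ¬ u ≤ v → ¬ v ≤ u → curv g I u v = 0) :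
    ∃ Φ : Finset S → ℝ, ∀ (I : Finset S) (a : S), IsIdeal I → Adm I a →
      g I a = Φ (insert a I) - Φ I := by
  refine ⟨fun I => Phi g I.card I, fun I a hI ha => ?_⟩
  have hcard : (insert a I).card = I.card + 1 := Finset.card_insert_of_notMem ha.1
  show g I a = Phi g (insert a I).card (insert a I) - Phi g I.card I
  rw [hcard, phi_step g hflat I.card I a rfl hI ha]
  ring
end

section
/- If two edge fields g, g' on the ideal lattice of a finite poset have the same diamond curvature and agree on every reference-tree edge (K \ {m(K)}, m(K)) for all nonempty ideals K, then g = g'. -/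
open Finset

variable {S : Type*} [Fintype S] [DecidableEq S] [PartialOrder S]

theorem edge_field_determined_by_curvature_and_tree (τ : S → ℕ)
    (hinj : Function.Injective τ) (hmono : ∀ a b : S, a ≤ b → τ a ≤ τ b)
    (g g' : Finset S → S → ℝ)
    (hcurv : ∀ (I : Finset S) (u v : S), IsIdeal I → Adm I u → Adm I v →
      ¬ u ≤ v → ¬ v ≤ u → curv g I u v = curv g' I u v)
    (htree : ∀ K : Finset S, IsIdeal K → ∀ m ∈ K, (∀ b ∈ K, τ b ≤ τ m) →
      g (K.erase m) m = g' (K.erase m) m) :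
    ∀ (I : Finset S) (a : S), IsIdeal I → Adm I a → g I a = g' I a := by
  classical
  have main : ∀ n : ℕ, ∀ (I : Finset S) (a : S), IsIdeal I → Adm I a →
      (insert a I).card * (Fintype.card S + 1) +
        ((insert a I).filter (fun b => τ a < τ b)).card = n →
      g I a = g' I a := by
    intro n
    induction n using Nat.strong_induction_on with
    | _ n ih =>
      intro I a hI ha hn
      set C := Fintype.card S with hC
      set K := insert a I with hK
      have haK : a ∈ K := Finset.mem_insert_self a I
      have hKid : IsIdeal K := by
        intro s hs u hu
        rcases Finset.mem_insert.mp hs with rfl | hs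
        · rcases eq_or_lt_of_le hu with rfl | hlt
          · exact haK
          · exact Finset.mem_insert_of_mem (ha.2 u hlt)
        · exact Finset.mem_insert_of_mem (hI s hs u hu)
      obtain ⟨m, hmK, hmax⟩ := K.exists_max_image τ ⟨a, haK⟩
      by_cases hma : m = a
      · subst hma
        have := htree K hKid m haK hmax
        rwa [hK, Finset.erase_insert ha.1] at this
      · have hmI : m ∈ I := by
          rcases Finset.mem_insert.mp hmK with h | h
          · exact absurd h hma
          · exact h
        have hτa : τ a < τ m :=
          lt_of_le_of_ne (hmax a haK) (fun h => hma (hinj h.symm))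
        have hnma : ¬ m ≤ a := fun h => absurd (hmono m a h) (not_le.2 hτa)
        have hnam : ¬ a ≤ m := fun h => ha.1 (hI m hmI a h)
        -- key: every element of K has τ ≤ τ m, so m is maximal in K (and I)
        have hmtop : ∀ s ∈ K, m ≤ s → s = m := by
          intro s hs hms
          by_contra hne
          have h1 : τ m < τ s :=
            lt_of_le_of_ne (hmono m s hms) (fun h => hne (hinj h).symm)
          exact absurd (hmax s hs) (not_le.2 h1)
        set J := I.erase m with hJ
        have hJid : IsIdeal J := by
          intro s hs u hu
          have hsI : s ∈ I := Finset.mem_of_mem_erase hs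
          refine Finset.mem_erase.2 ⟨?_, hI s hsI u hu⟩
          rintro rfl
          exact (Finset.mem_erase.1 hs).1 (hmtop s (Finset.mem_insert_of_mem hsI) hu)
        have hmJ : Adm J m :=
          ⟨Finset.notMem_erase m I,
           fun u hu => Finset.mem_erase.2 ⟨ne_of_lt hu, hI m hmI u hu.le⟩⟩
        have haJ : Adm J a := by
          refine ⟨fun h => ha.1 (Finset.mem_of_mem_erase h), fun u hu => ?_⟩
          refine Finset.mem_erase.2 ⟨?_, ha.2 u hu⟩
          rintro rfl
          exact hnma hu.le
        have hImJ : insert m J = I := Finset.insert_erase hmI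
        set L := insert a J with hL
        have hLK : insert m L = K := by
          rw [hL, hJ, Finset.insert_comm, hImJ]
        have hLid : IsIdeal L := by
          intro s hs u hu
          have hsK : s ∈ insert m L := Finset.mem_insert_of_mem hs
          rw [hLK] at hsK
          have huK : u ∈ K := hKid s hsK u hu
          have hum : u ≠ m := by
            rintro rfl
            have : s = u := hmtop s hsK hu
            subst this
            rcases Finset.mem_insert.1 hs with h | h
            · exact hnam h.ge
            · exact (Finset.mem_erase.1 h).1 rfl
          rw [← hLK] at huK
          rcases Finset.mem_insert.1 huK with h | h
          · exact absurd h hum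
          · exact h
        have hmL : Adm L m := by
          constructor
          · intro h
            rcases Finset.mem_insert.1 h with h | h
            · exact hma h
            · exact (Finset.mem_erase.1 h).1 rfl
          · intro u hu
            exact Finset.mem_insert_of_mem (hmJ.2 u hu)
        -- cardinalities
        have haI : a ∉ I := ha.1
        have hKcard : K.card = I.card + 1 := Finset.card_insert_of_notMem haI
        have haJ' : a ∉ J := haJ.1
        have hLcard : L.card = I.card := by
          rw [hL, Finset.card_insert_of_notMem haJ', hJ,
            Finset.card_erase_of_mem hmI]
          have : 1 ≤ I.card := Finset.card_pos.2 ⟨m, hmI⟩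
          omega
        have hmul : (I.card + 1) * (C + 1) = I.card * (C + 1) + (C + 1) := by ring
        have hMpos : 1 ≤ (K.filter (fun b => τ a < τ b)).card :=
          Finset.card_pos.2 ⟨m, Finset.mem_filter.2 ⟨hmK, hτa⟩⟩
        have hfil_le : ∀ (T : Finset S) (p : S → Prop) [DecidablePred p],
            (T.filter p).card ≤ C := by
          intro T p _
          exact le_trans (Finset.card_le_card (Finset.filter_subset _ _))
            (Finset.card_le_univ T)
        have hn' : I.card * (C + 1) + (C + 1) +
            (K.filter (fun b => τ a < τ b)).card = n := by
          rw [← hn, hKcard, hmul]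
        set t := I.card * (C + 1) with ht
        -- recursive call 1 : (J, a), insert a J = L
        have hlt1 : L.card * (C + 1) + (L.filter (fun b => τ a < τ b)).card < n := by
          have h1 := hfil_le L (fun b => τ a < τ b)
          rw [hLcard, ← ht]
          omega
        have eq1 : g J a = g' J a :=
          ih _ hlt1 J a hJid haJ (by rw [hL])
        -- recursive call 2 : (J, m), insert m J = I
        have hlt2 : I.card * (C + 1) + (I.filter (fun b => τ m < τ b)).card < n := by
          have h1 := hfil_le I (fun b => τ m < τ b)
          rw [← ht]
          omega
        have eq2 : g J m = g' J m :=
          ih _ hlt2 J m hJid hmJ (by rw [hImJ])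
        -- recursive call 3 : (L, m), insert m L = K
        have hM3 : K.filter (fun b => τ m < τ b) = ∅ :=
          Finset.filter_eq_empty_iff.2 fun b hb => not_lt.2 (hmax b hb)
        have hlt3 : K.card * (C + 1) + 0 < n := by
          rw [hKcard, hmul]
          omega
        have eq3 : g L m = g' L m :=
          ih _ hlt3 L m hLid hmL (by rw [hLK, hM3, Finset.card_empty])
        have hc := hcurv J a m hJid haJ hmJ hnam hnma
        simp only [curv] at hc
        rw [hImJ, ← hL] at hc
        linear_combination hc - eq2 + eq1 + eq3
  intro I a hI ha
  exact main _ I a hI ha rfl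
end

section
/- Let g be an edge field on the ideal lattice of a finite poset whose diamond curvature satisfies |κ(d)| ≤ ε for every diamond. Then for any two admissible paths γ, γ' of length L with the same endpoints, |V(γ) − V(γ')| ≤ C(L,2)·ε, where V is the edge-additive path value. -/
open Finset

variable {S : Type*} [Fintype S] [DecidableEq S] [PartialOrder S]

/-- `IsPathFrom I l J`: the list `l` of added elements gives an admissible path from `I` to `J`. -/
def IsPathFrom (I : Finset S) : List S → Finset S → Prop
  | [], J => I = J
  | a :: as, J => Adm I a ∧ IsPathFrom (insert a I) as J

/-- Edge-additive valuation of a path given by the list of added elements. -/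
def pathValue (g : Finset S → S → ℝ) : Finset S → List S → ℝ
  | _, [] => 0
  | I, a :: as => g I a + pathValue g (insert a I) as

lemma isIdeal_insert {I : Finset S} {a : S} (hI : IsIdeal I) (ha : Adm I a) :
    IsIdeal (insert a I) := by
  intro s hs u hu
  rcases Finset.mem_insert.1 hs with rfl | hs
  · rcases lt_or_eq_of_le hu with h | rfl
    · exact Finset.mem_insert_of_mem (ha.2 u h)
    · exact Finset.mem_insert_self _ _
  · exact Finset.mem_insert_of_mem (hI s hs u hu)

lemma mem_of_path {I J : Finset S} {l : List S} (h : IsPathFrom I l J) :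
    ∀ x ∈ J, x ∈ I ∨ x ∈ l := by
  induction l generalizing I with
  | nil => intro x hx; left; exact h ▸ hx
  | cons b bs ih =>
    intro x hx
    rcases ih h.2 x hx with hxI | hxl
    · rcases Finset.mem_insert.1 hxI with rfl | h'
      · right; exact List.mem_cons_self
      · left; exact h'
    · right; exact List.mem_cons_of_mem _ hxl

lemma path_subset {l : List S} : ∀ {I J : Finset S}, IsPathFrom I l J → I ⊆ J := by
  induction l with
  | nil => intro I J h; exact h ▸ Finset.Subset.refl _
  | cons b bs ih =>
    intro I J h x hx
    exact ih h.2 (Finset.mem_insert_of_mem hx)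

lemma bubble_lemma (g : Finset S → S → ℝ) (ε : ℝ) (hε : 0 ≤ ε)
    (hbound : ∀ (I : Finset S) (u v : S), IsIdeal I → Adm I u → Adm I v →
      ¬ u ≤ v → ¬ v ≤ u → |curv g I u v| ≤ ε)
    (a : S) :
    ∀ (γ : List S) (I J : Finset S), IsIdeal I → IsPathFrom I γ J → a ∈ γ →
      (∀ w : S, w < a → w ∈ I) →
      ∃ δ : List S, IsPathFrom I (a :: δ) J ∧ δ.length + 1 = γ.length ∧
        |pathValue g I γ - pathValue g I (a :: δ)| ≤ ((γ.length - 1 : ℕ) : ℝ) * ε := by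
  intro γ
  induction γ with
  | nil => intro I J _ _ ha _; simp at ha
  | cons b rest ih =>
    intro I J hI hpath ha hlow
    rcases List.mem_cons.1 ha with rfl | ha'
    · refine ⟨rest, hpath, rfl, ?_⟩
      simp only [sub_self, abs_zero]
      positivity
    · obtain ⟨hb, hrest⟩ := hpath
      obtain ⟨δ, hδpath, hδlen, hδval⟩ := ih (insert b I) J
          (isIdeal_insert hI hb) hrest ha'
          (fun w hw => Finset.mem_insert_of_mem (hlow w hw))
      obtain ⟨haAdm, hδtail⟩ := hδpath
      have hab : ¬ a ≤ b := by
        intro h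
        rcases lt_or_eq_of_le h with h' | rfl
        · exact haAdm.1 (Finset.mem_insert_of_mem (hb.2 a h'))
        · exact haAdm.1 (Finset.mem_insert_self _ _)
      have hba : ¬ b ≤ a := by
        intro h
        rcases lt_or_eq_of_le h with h' | rfl
        · exact hb.1 (hlow b h')
        · exact hab le_rfl
      have hane : a ≠ b := fun h => hab (le_of_eq h)
      have haI : Adm I a := ⟨fun h => haAdm.1 (Finset.mem_insert_of_mem h),
        fun u hu => hlow u hu⟩
      have hbIns : Adm (insert a I) b :=
        ⟨fun h => by
          rcases Finset.mem_insert.1 h with rfl | h'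
          · exact hane rfl
          · exact hb.1 h',
         fun u hu => Finset.mem_insert_of_mem (hb.2 u hu)⟩
      have hcomm : insert b (insert a I) = insert a (insert b I) :=
        Finset.insert_comm _ _ _
      refine ⟨b :: δ, ⟨haI, hbIns, hcomm ▸ hδtail⟩, by simp [← hδlen], ?_⟩
      have hrestlen : 1 ≤ rest.length := List.length_pos_iff.mpr (List.ne_nil_of_mem ha')
      have hswap : pathValue g I (b :: a :: δ) - pathValue g I (a :: b :: δ)
          = curv g I a b := by
        simp only [pathValue, curv, hcomm]
        ring
      have hc : |curv g I a b| ≤ ε := hbound I a b hI haI hb hab hba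
      have h1 : |pathValue g I (b :: rest) - pathValue g I (b :: a :: δ)|
          ≤ ((rest.length - 1 : ℕ) : ℝ) * ε := by
        simpa [pathValue] using hδval
      calc |pathValue g I (b :: rest) - pathValue g I (a :: b :: δ)|
          ≤ |pathValue g I (b :: rest) - pathValue g I (b :: a :: δ)|
            + |pathValue g I (b :: a :: δ) - pathValue g I (a :: b :: δ)| := by
            exact abs_sub_le _ _ _
        _ ≤ ((rest.length - 1 : ℕ) : ℝ) * ε + ε := add_le_add h1 (hswap ▸ hc)
        _ = (((b :: rest).length - 1 : ℕ) : ℝ) * ε := by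
            have : (rest.length - 1 : ℕ) + 1 = rest.length := Nat.sub_add_cancel hrestlen
            simp only [List.length_cons, Nat.add_sub_cancel]
            rw [← this]
            push_cast
            ring

theorem order_insensitivity_bound (g : Finset S → S → ℝ) (ε : ℝ) (hε : 0 ≤ ε)
    (hbound : ∀ (I : Finset S) (u v : S), IsIdeal I → Adm I u → Adm I v →
      ¬ u ≤ v → ¬ v ≤ u → |curv g I u v| ≤ ε)
    (I J : Finset S) (hI : IsIdeal I) (L : ℕ)
    (γ γ' : List S) (hγ : IsPathFrom I γ J) (hγ' : IsPathFrom I γ' J)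
    (hLγ : γ.length = L) (hLγ' : γ'.length = L) :
    |pathValue g I γ - pathValue g I γ'| ≤ L.choose 2 * ε := by
  induction L generalizing I γ γ' with
  | zero =>
    rw [List.length_eq_zero_iff] at hLγ hLγ'
    subst hLγ; subst hLγ'
    simp [pathValue]
  | succ L ihL =>
    cases γ' with
    | nil => simp at hLγ'
    | cons a γ'₂ =>
      obtain ⟨haAdm, hγ'₂⟩ := hγ'
      have haJ : a ∈ J := path_subset hγ'₂ (Finset.mem_insert_self _ _)
      have haγ : a ∈ γ := by
        rcases mem_of_path hγ a haJ with h | h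
        · exact absurd h haAdm.1
        · exact h
      obtain ⟨δ, hδpath, hδlen, hδval⟩ := bubble_lemma g ε hε hbound a γ I J hI hγ haγ
        (fun w hw => haAdm.2 w hw)
      have hδL : δ.length = L := by omega
      have hIH : |pathValue g (insert a I) δ - pathValue g (insert a I) γ'₂|
          ≤ L.choose 2 * ε :=
        ihL (insert a I) (isIdeal_insert hI haAdm) δ γ'₂ hδpath.2 hγ'₂ hδL
          (by simpa using hLγ')
      have hsplit : pathValue g I (a :: δ) - pathValue g I (a :: γ'₂)
          = pathValue g (insert a I) δ - pathValue g (insert a I) γ'₂ := by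
        simp only [pathValue]; ring
      have hfin : |pathValue g I γ - pathValue g I (a :: γ'₂)|
          ≤ ((γ.length - 1 : ℕ) : ℝ) * ε + L.choose 2 * ε := by
        calc |pathValue g I γ - pathValue g I (a :: γ'₂)|
            ≤ |pathValue g I γ - pathValue g I (a :: δ)|
              + |pathValue g I (a :: δ) - pathValue g I (a :: γ'₂)| := abs_sub_le _ _ _
          _ ≤ ((γ.length - 1 : ℕ) : ℝ) * ε + L.choose 2 * ε :=
              add_le_add hδval (hsplit ▸ hIH)
      have hlen1 : (γ.length - 1 : ℕ) = L := by omega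
      have hch : ((L + 1).choose 2 : ℝ) = (L : ℝ) + (L.choose 2 : ℝ) := by
        rw [Nat.choose_succ_succ]
        push_cast [Nat.choose_one_right]
        ring
      calc |pathValue g I γ - pathValue g I (a :: γ'₂)|
          ≤ ((γ.length - 1 : ℕ) : ℝ) * ε + L.choose 2 * ε := hfin
        _ = ((L + 1).choose 2 : ℝ) * ε := by rw [hlen1, hch]; ring
end
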